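/- Let T₁ ∈ B(H₁) and T₂ ∈ B(H₂) be polynomially bounded operators, and let X : H₂ → H₁ be a bounded operator such that T₁^N X T₂^N = 0 for some integer N ≥ 0. Then the block operator R = [[T₁, X],[0, T₂]] on H₁ ⊕ H₂ is polynomially bounded: there exists C > 0 with ‖φ(R)‖ ≤ C‖φ‖_∞ for all polynomials φ. -/

import Mathlib

/-!
Write `δ(φ)` for the upper right entry of `φ(R)` and `S = divX` for the backward shift. Since
`φ = z · Sφ + φ(0) = Sφ · z + φ(0)` and `φ ↦ φ(R)` is multiplicative,
`δ(φ) = X (Sφ)(T₂) + T₁ δ(Sφ) = (Sφ)(T₁) X + δ(Sφ) T₂`. Iterating each identity `N` times gives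
`δ(φ) = ∑_{j<N} T₁^j X (S^{j+1}φ)(T₂) + ∑_{i<N} T₁^N (S^{i+1+N}φ)(T₁) X T₂^i
  + T₁^N δ(S^{2N}φ) T₂^N`,
whose last term vanishes because `T₁^N δ(ψ) T₂^N` is assembled from `T₁^N X T₂^N = 0`.
By the Schwarz lemma `‖Sφ‖_∞ ≤ 2 ‖φ‖_∞`, so polynomial boundedness of `T₁` and `T₂` bounds the
remaining `2N` terms by multiples of `‖φ‖_∞`.
-/

open Metric ContinuousLinearMap

/-- The sup norm of a polynomial over the open unit disc. -/
noncomputable def discSupNorm (φ : Polynomial ℂ) : ℝ :=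
  ⨆ z : ball (0 : ℂ) 1, ‖φ.eval (z : ℂ)‖

open Polynomial

namespace ContinuousLinearMap

variable {𝕜 E F : Type*} [NontriviallyNormedField 𝕜]
  [NormedAddCommGroup E] [NormedSpace 𝕜 E] [NormedAddCommGroup F] [NormedSpace 𝕜 F]

/-- The operator `[[A, Y], [0, B]]` on `E × F`. -/
noncomputable def blockTriangular (A : E →L[𝕜] E) (Y : F →L[𝕜] E) (B : F →L[𝕜] F) :
    E × F →L[𝕜] E × F :=
  (A.comp (fst 𝕜 E F) + Y.comp (snd 𝕜 E F)).prod (B.comp (snd 𝕜 E F))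

@[simp]
lemma blockTriangular_apply (A : E →L[𝕜] E) (Y : F →L[𝕜] E) (B : F →L[𝕜] F) (p : E × F) :
    blockTriangular A Y B p = (A p.1 + Y p.2, B p.2) := rfl

lemma blockTriangular_mul (A A' : E →L[𝕜] E) (Y Y' : F →L[𝕜] E) (B B' : F →L[𝕜] F) :
    blockTriangular A Y B * blockTriangular A' Y' B' =
      blockTriangular (A * A') (A.comp Y' + Y.comp B') (B * B') := by
  ext p <;> simp

lemma blockTriangular_add (A A' : E →L[𝕜] E) (Y Y' : F →L[𝕜] E) (B B' : F →L[𝕜] F) :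
    blockTriangular A Y B + blockTriangular A' Y' B' =
      blockTriangular (A + A') (Y + Y') (B + B') := by
  ext p <;> simp

lemma algebraMap_eq_blockTriangular (a : 𝕜) :
    algebraMap 𝕜 (E × F →L[𝕜] E × F) a =
      blockTriangular (algebraMap 𝕜 _ a) 0 (algebraMap 𝕜 _ a) := by
  ext p <;> simp [algebraMap_apply]

lemma fst_comp_blockTriangular_comp_inr (A : E →L[𝕜] E) (Y : F →L[𝕜] E) (B : F →L[𝕜] F) :
    (fst 𝕜 E F).comp ((blockTriangular A Y B).comp (inr 𝕜 E F)) = Y := by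
  ext; simp

lemma norm_blockTriangular_le (A : E →L[𝕜] E) (Y : F →L[𝕜] E) (B : F →L[𝕜] F) :
    ‖blockTriangular A Y B‖ ≤ ‖A‖ + ‖Y‖ + ‖B‖ := by
  have hA : ‖A.comp (fst 𝕜 E F)‖ ≤ ‖A‖ :=
    (opNorm_comp_le _ _).trans (mul_le_of_le_one_right (norm_nonneg _) (norm_fst_le 𝕜 E F))
  have hY : ‖Y.comp (snd 𝕜 E F)‖ ≤ ‖Y‖ :=
    (opNorm_comp_le _ _).trans (mul_le_of_le_one_right (norm_nonneg _) (norm_snd_le 𝕜 E F))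
  have hB : ‖B.comp (snd 𝕜 E F)‖ ≤ ‖B‖ :=
    (opNorm_comp_le _ _).trans (mul_le_of_le_one_right (norm_nonneg _) (norm_snd_le 𝕜 E F))
  rw [blockTriangular, opNorm_prod]
  refine max_le ((norm_add_le _ _).trans ?_) (hB.trans ?_)
  · linarith [norm_nonneg B]
  · linarith [norm_nonneg A, norm_nonneg Y]

lemma opNorm_comp_comp_le {G H : Type*} [NormedAddCommGroup G] [NormedSpace 𝕜 G]
    [NormedAddCommGroup H] [NormedSpace 𝕜 H] (f : G →L[𝕜] H) (g : F →L[𝕜] G) (h : E →L[𝕜] F) :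
    ‖f.comp (g.comp h)‖ ≤ ‖f‖ * (‖g‖ * ‖h‖) :=
  (opNorm_comp_le _ _).trans (by gcongr; exact opNorm_comp_le _ _)

/-- The upper right entry `δ_Y(φ)` of `φ([[A, Y], [0, B]])`. -/
noncomputable def offDiag (A : E →L[𝕜] E) (Y : F →L[𝕜] E) (B : F →L[𝕜] F) (φ : 𝕜[X]) :
    F →L[𝕜] E :=
  (fst 𝕜 E F).comp ((aeval (blockTriangular A Y B) φ).comp (inr 𝕜 E F))

variable (A : E →L[𝕜] E) (Y : F →L[𝕜] E) (B : F →L[𝕜] F)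

lemma offDiag_add (φ ψ : 𝕜[X]) : offDiag A Y B (φ + ψ) = offDiag A Y B φ + offDiag A Y B ψ := by
  simp [offDiag]

lemma aeval_blockTriangular (φ : 𝕜[X]) :
    aeval (blockTriangular A Y B) φ =
      blockTriangular (aeval A φ) (offDiag A Y B φ) (aeval B φ) := by
  induction φ using Polynomial.induction_on with
  | C a =>
    simp only [offDiag, aeval_C, algebraMap_eq_blockTriangular, fst_comp_blockTriangular_comp_inr]
  | add φ ψ hφ hψ =>
    rw [map_add, hφ, hψ, blockTriangular_add, offDiag_add, map_add, map_add]
  | monomial n a ih =>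
    have hmul : C a * X ^ (n + 1) = C a * X ^ n * X := by ring
    rw [hmul, offDiag, map_mul, aeval_X, ih, blockTriangular_mul,
      fst_comp_blockTriangular_comp_inr]
    simp only [map_mul, aeval_X]

lemma offDiag_mul (φ ψ : 𝕜[X]) :
    offDiag A Y B (φ * ψ) =
      (aeval A φ).comp (offDiag A Y B ψ) + (offDiag A Y B φ).comp (aeval B ψ) := by
  conv_lhs => rw [offDiag, map_mul, aeval_blockTriangular, aeval_blockTriangular,
    blockTriangular_mul, fst_comp_blockTriangular_comp_inr]

lemma offDiag_X : offDiag A Y B X = Y := by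
  rw [offDiag, aeval_X, fst_comp_blockTriangular_comp_inr]

lemma offDiag_C (a : 𝕜) : offDiag A Y B (C a) = 0 := by
  rw [offDiag, aeval_C, algebraMap_eq_blockTriangular, fst_comp_blockTriangular_comp_inr]

lemma offDiag_eq_comp_add_comp_divX (φ : 𝕜[X]) :
    offDiag A Y B φ = Y.comp (aeval B φ.divX) + A.comp (offDiag A Y B φ.divX) := by
  conv_lhs => rw [← X_mul_divX_add φ]
  rw [offDiag_add, offDiag_mul, offDiag_X, offDiag_C, aeval_X, add_zero, add_comm]

lemma offDiag_eq_comp_divX_add_comp (φ : 𝕜[X]) :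
    offDiag A Y B φ = (aeval A φ.divX).comp Y + (offDiag A Y B φ.divX).comp B := by
  conv_lhs => rw [← divX_mul_X_add φ]
  rw [offDiag_add, offDiag_mul, offDiag_X, offDiag_C, aeval_X, add_zero]

lemma offDiag_eq_sum_add_pow_comp (φ : 𝕜[X]) (n : ℕ) :
    offDiag A Y B φ = ∑ j ∈ Finset.range n, (A ^ j).comp (Y.comp (aeval B (divX^[j + 1] φ)))
      + (A ^ n).comp (offDiag A Y B (divX^[n] φ)) := by
  induction n with
  | zero => simp [one_def]
  | succ n ih =>
    rw [ih, offDiag_eq_comp_add_comp_divX _ _ _ (divX^[n] φ), Finset.sum_range_succ,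
      comp_add, add_assoc, pow_succ, mul_def, comp_assoc, Function.iterate_succ_apply']

lemma offDiag_eq_sum_add_comp_pow (φ : 𝕜[X]) (n : ℕ) :
    offDiag A Y B φ = ∑ i ∈ Finset.range n, (aeval A (divX^[i + 1] φ)).comp (Y.comp (B ^ i))
      + (offDiag A Y B (divX^[n] φ)).comp (B ^ n) := by
  induction n with
  | zero => simp [one_def]
  | succ n ih =>
    rw [ih, offDiag_eq_comp_divX_add_comp _ _ _ (divX^[n] φ), Finset.sum_range_succ,
      add_comp, add_assoc, pow_succ', mul_def, comp_assoc, comp_assoc, Function.iterate_succ_apply']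

lemma pow_comp_offDiag_comp_pow_eq_zero {N : ℕ} (hY : (A ^ N).comp (Y.comp (B ^ N)) = 0)
    (φ : 𝕜[X]) : (A ^ N).comp ((offDiag A Y B φ).comp (B ^ N)) = 0 := by
  induction φ using Polynomial.induction_on with
  | C a => simp [offDiag_C]
  | add φ ψ hφ hψ => simp [offDiag_add, hφ, hψ]
  | monomial n a ih =>
    have hcomm : (A ^ N).comp (aeval A (C a * X ^ n)) = (aeval A (C a * X ^ n)).comp (A ^ N) := by
      rw [← mul_def, ← mul_def, ← aeval_X_pow (R := 𝕜) (x := A) (n := N)]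
      exact ((Commute.all (X ^ N : 𝕜[X]) (C a * X ^ n)).map (aeval A)).eq
    have hmul : C a * X ^ (n + 1) = C a * X ^ n * X := by ring
    have hB : B.comp (B ^ N) = (B ^ N).comp B := by
      rw [← mul_def, ← mul_def, pow_mul_comm']
    rw [hmul, offDiag_mul, offDiag_X, aeval_X, add_comp, comp_add]
    simp only [comp_assoc]
    rw [← comp_assoc (A ^ N) (aeval A _), hcomm, comp_assoc, hY, comp_zero, zero_add, hB,
      ← comp_assoc _ (B ^ N), ← comp_assoc, ih, zero_comp]

lemma offDiag_eq_of_pow_comp_pow_eq_zero {N : ℕ} (hY : (A ^ N).comp (Y.comp (B ^ N)) = 0)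
    (φ : 𝕜[X]) :
    offDiag A Y B φ = ∑ j ∈ Finset.range N, (A ^ j).comp (Y.comp (aeval B (divX^[j + 1] φ)))
      + ∑ i ∈ Finset.range N,
          (A ^ N).comp ((aeval A (divX^[i + 1 + N] φ)).comp (Y.comp (B ^ i))) := by
  rw [offDiag_eq_sum_add_pow_comp A Y B φ N, offDiag_eq_sum_add_comp_pow A Y B (divX^[N] φ) N,
    comp_add, pow_comp_offDiag_comp_pow_eq_zero A Y B hY, add_zero, comp_finsetSum]
  simp only [Function.iterate_add_apply]

end ContinuousLinearMap

lemma discSupNorm_bddAbove (φ : ℂ[X]) :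
    BddAbove (Set.range fun z : ball (0 : ℂ) 1 => ‖φ.eval (z : ℂ)‖) := by
  refine ⟨∑ i ∈ Finset.range (φ.natDegree + 1), ‖φ.coeff i‖, ?_⟩
  rintro _ ⟨⟨z, hz⟩, rfl⟩
  rw [mem_ball, dist_zero_right] at hz
  dsimp only
  rw [eval_eq_sum_range]
  refine (norm_sum_le _ _).trans (Finset.sum_le_sum fun i _ => ?_)
  rw [norm_mul, norm_pow]
  exact mul_le_of_le_one_right (norm_nonneg _) (pow_le_one₀ (norm_nonneg z) hz.le)

lemma norm_eval_le_discSupNorm (φ : ℂ[X]) {z : ℂ} (hz : z ∈ ball (0 : ℂ) 1) :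
    ‖φ.eval z‖ ≤ discSupNorm φ :=
  le_ciSup (discSupNorm_bddAbove φ) (⟨z, hz⟩ : ball (0 : ℂ) 1)

lemma discSupNorm_le {φ : ℂ[X]} {M : ℝ} (h : ∀ z ∈ ball (0 : ℂ) 1, ‖φ.eval z‖ ≤ M) :
    discSupNorm φ ≤ M :=
  have : Nonempty (ball (0 : ℂ) 1) := ⟨⟨0, mem_ball_self one_pos⟩⟩
  ciSup_le fun z => h z z.2

lemma dslope_eval_zero_eq_eval_divX {𝕜 : Type*} [NontriviallyNormedField 𝕜] (φ : 𝕜[X]) (z : 𝕜) :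
    dslope (fun z => φ.eval z) 0 z = φ.divX.eval z := by
  rcases eq_or_ne z 0 with rfl | hz
  · rw [dslope_same, Polynomial.deriv, ← coeff_zero_eq_eval_zero, ← coeff_zero_eq_eval_zero,
      coeff_divX, coeff_derivative]
    simp
  · rw [dslope_of_ne _ hz, slope_def_field]
    conv_lhs => rw [← divX_mul_X_add φ]
    simp [hz]

lemma discSupNorm_divX_le (φ : ℂ[X]) : discSupNorm φ.divX ≤ 2 * discSupNorm φ := by
  have hmaps : Set.MapsTo (fun z => φ.eval z) (ball 0 1)
      (closedBall (φ.eval 0) (2 * discSupNorm φ)) :=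
    fun w hw => by
      rw [mem_closedBall, dist_eq_norm, two_mul]
      exact (norm_sub_le _ _).trans (add_le_add (norm_eval_le_discSupNorm φ hw)
        (norm_eval_le_discSupNorm φ (mem_ball_self one_pos)))
  refine discSupNorm_le fun z hz => ?_
  simpa [dslope_eval_zero_eq_eval_divX] using
    Complex.norm_dslope_le_div_of_mapsTo_ball φ.differentiableOn hmaps hz

lemma discSupNorm_divX_iterate_le (φ : ℂ[X]) (n : ℕ) :
    discSupNorm (divX^[n] φ) ≤ 2 ^ n * discSupNorm φ := by
  induction n with
  | zero => simp
  | succ n ih =>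
    rw [Function.iterate_succ_apply', pow_succ', mul_assoc]
    exact (discSupNorm_divX_le _).trans (by gcongr)

def PolynomiallyBounded {E : Type*} [NormedAddCommGroup E] [NormedSpace ℂ E] (T : E →L[ℂ] E) :
    Prop :=
  ∃ C > (0 : ℝ), ∀ φ : ℂ[X], ‖aeval T φ‖ ≤ C * discSupNorm φ

namespace PolynomiallyBounded

variable {E F : Type*} [NormedAddCommGroup E] [NormedSpace ℂ E] [NormedAddCommGroup F]
  [NormedSpace ℂ F] {A : E →L[ℂ] E} {Y : F →L[ℂ] E} {B : F →L[ℂ] F}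

lemma norm_aeval_divX_iterate_le {T : E →L[ℂ] E} {C : ℝ} (hC₀ : 0 ≤ C)
    (hC : ∀ φ : ℂ[X], ‖aeval T φ‖ ≤ C * discSupNorm φ) (φ : ℂ[X]) (n : ℕ) :
    ‖aeval T (divX^[n] φ)‖ ≤ C * 2 ^ n * discSupNorm φ :=
  (hC _).trans <| by rw [mul_assoc]; gcongr; exact discSupNorm_divX_iterate_le φ n

lemma exists_norm_offDiag_le (hA : PolynomiallyBounded A) (hB : PolynomiallyBounded B) {N : ℕ}
    (hY : (A ^ N).comp (Y.comp (B ^ N)) = 0) :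
    ∃ K ≥ (0 : ℝ), ∀ φ : ℂ[X], ‖offDiag A Y B φ‖ ≤ K * discSupNorm φ := by
  obtain ⟨C₁, hC₁, hA⟩ := hA
  obtain ⟨C₂, hC₂, hB⟩ := hB
  refine ⟨∑ j ∈ Finset.range N, ‖A ^ j‖ * (‖Y‖ * (C₂ * 2 ^ (j + 1)))
    + ∑ i ∈ Finset.range N, ‖A ^ N‖ * (C₁ * 2 ^ (i + 1 + N) * (‖Y‖ * ‖B ^ i‖)),
    by positivity, fun φ => ?_⟩
  rw [offDiag_eq_of_pow_comp_pow_eq_zero A Y B hY, add_mul, Finset.sum_mul, Finset.sum_mul]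
  refine (norm_add_le _ _).trans (add_le_add (norm_sum_le_of_le _ fun j _ => ?_)
    (norm_sum_le_of_le _ fun i _ => ?_))
  · calc _ ≤ ‖A ^ j‖ * (‖Y‖ * ‖aeval B (divX^[j + 1] φ)‖) := opNorm_comp_comp_le _ _ _
      _ ≤ ‖A ^ j‖ * (‖Y‖ * (C₂ * 2 ^ (j + 1) * discSupNorm φ)) := by
          gcongr; exact norm_aeval_divX_iterate_le hC₂.le hB φ _
      _ = _ := by ring
  · calc _ ≤ ‖A ^ N‖ * (‖aeval A (divX^[i + 1 + N] φ)‖ * (‖Y‖ * ‖B ^ i‖)) :=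
          (opNorm_comp_le _ _).trans (by gcongr; exact opNorm_comp_comp_le _ _ _)
      _ ≤ ‖A ^ N‖ * (C₁ * 2 ^ (i + 1 + N) * discSupNorm φ * (‖Y‖ * ‖B ^ i‖)) := by
          gcongr; exact norm_aeval_divX_iterate_le hC₁.le hA φ _
      _ = _ := by ring

theorem blockTriangular (hA : PolynomiallyBounded A) (hB : PolynomiallyBounded B) {N : ℕ}
    (hY : (A ^ N).comp (Y.comp (B ^ N)) = 0) :
    PolynomiallyBounded (blockTriangular A Y B) := by
  obtain ⟨K, hK, hδ⟩ := exists_norm_offDiag_le hA hB hY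
  obtain ⟨C₁, hC₁, hA⟩ := hA
  obtain ⟨C₂, hC₂, hB⟩ := hB
  refine ⟨C₁ + K + C₂, by positivity, fun φ => ?_⟩
  calc ‖aeval (ContinuousLinearMap.blockTriangular A Y B) φ‖
      ≤ ‖aeval A φ‖ + ‖offDiag A Y B φ‖ + ‖aeval B φ‖ := by
        rw [aeval_blockTriangular]; exact norm_blockTriangular_le _ _ _
    _ ≤ C₁ * discSupNorm φ + K * discSupNorm φ + C₂ * discSupNorm φ := by
        gcongr <;> apply_assumption
    _ = (C₁ + K + C₂) * discSupNorm φ := by ring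

end PolynomiallyBounded

theorem block_polynomially_bounded {H₁ H₂ : Type*}
    [NormedAddCommGroup H₁] [InnerProductSpace ℂ H₁]
    [NormedAddCommGroup H₂] [InnerProductSpace ℂ H₂]
    (T₁ : H₁ →L[ℂ] H₁) (T₂ : H₂ →L[ℂ] H₂)
    (hT₁ : ∃ C > (0 : ℝ), ∀ φ : Polynomial ℂ, ‖Polynomial.aeval T₁ φ‖ ≤ C * discSupNorm φ)
    (hT₂ : ∃ C > (0 : ℝ), ∀ φ : Polynomial ℂ, ‖Polynomial.aeval T₂ φ‖ ≤ C * discSupNorm φ)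
    (X : H₂ →L[ℂ] H₁) (N : ℕ)
    (hX : (T₁ ^ N).comp (X.comp (T₂ ^ N)) = 0)
    (R : H₁ × H₂ →L[ℂ] H₁ × H₂)
    (hR : R = (T₁.comp (fst ℂ H₁ H₂) + X.comp (snd ℂ H₁ H₂)).prod (T₂.comp (snd ℂ H₁ H₂))) :
    ∃ C > (0 : ℝ), ∀ φ : Polynomial ℂ, ‖Polynomial.aeval R φ‖ ≤ C * discSupNorm φ := by
  subst hR
  exact PolynomiallyBounded.blockTriangular hT₁ hT₂ hX
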